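/- arXiv:1608.07170 — 2 statements merged into one kernel-verified Lean document; each statement's English description precedes it below -/
import Mathlib

section
/- Let K ⊆ ℝⁿ be a pointed closed convex cone with longest chain of faces of length ℓ_K. Then every x ∈ K can be written as a sum of at most ℓ_K − 1 elements belonging to extreme rays of K; i.e., the Carathéodory number κ(K) satisfies κ(K) ≤ ℓ_K − 1. -/
/-- The dimension of a set: the linear dimension of its affine hull. -/
noncomputable def setDim {E : Type*} [AddCommGroup E] [Module ℝ E] (S : Set E) : ℕ :=
  Module.finrank ℝ (vectorSpan ℝ S)

/-- `F` is a face of the convex set `S`: a convex subset such that whenever a point of the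
open segment between `x, y ∈ S` lies in `F`, both endpoints lie in `F`. -/
def IsFaceOf {E : Type*} [AddCommGroup E] [Module ℝ E] (S F : Set E) : Prop :=
  F ⊆ S ∧ Convex ℝ F ∧ ∀ ⦃x⦄, x ∈ S → ∀ ⦃y⦄, y ∈ S → ∀ ⦃a : ℝ⦄, 0 < a → a < 1 →
    a • x + (1 - a) • y ∈ F → x ∈ F ∧ y ∈ F

/-- An extreme ray of `K` is a one-dimensional face. -/
def IsExtremeRay {E : Type*} [AddCommGroup E] [Module ℝ E] (K R : Set E) : Prop :=
  IsFaceOf K R ∧ setDim R = 1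

/-- `x` is a sum of at most `k` elements, each belonging to an extreme ray of `K`. -/
def IsSumOfExtremeRayElems {E : Type*} [AddCommGroup E] [Module ℝ E]
    (K : Set E) (k : ℕ) (x : E) : Prop :=
  ∃ m : ℕ, m ≤ k ∧ ∃ f : Fin m → E,
    (∀ i, ∃ R : Set E, IsExtremeRay K R ∧ f i ∈ R) ∧ x = ∑ i, f i

/-- There is a chain of `l` nonempty faces of `S`, each properly containing the next. -/
def HasFaceChainOfLength {E : Type*} [AddCommGroup E] [Module ℝ E] (S : Set E) (l : ℕ) : Prop :=
  ∃ c : Fin l → Set E, StrictAnti c ∧ ∀ i, IsFaceOf S (c i) ∧ (c i).Nonempty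

/-- `l` is the length of the longest chain of nonempty faces of `S`. -/
def IsLongestFaceChainLength {E : Type*} [AddCommGroup E] [Module ℝ E] (S : Set E) (l : ℕ) : Prop :=
  HasFaceChainOfLength S l ∧ ∀ m, HasFaceChainOfLength S m → m ≤ l

section Cara

set_option linter.unusedSectionVars false

variable {E : Type*} [NormedAddCommGroup E] [NormedSpace ℝ E]
variable {K : Set E}
variable (hconv : Convex ℝ K) (hcone : ∀ (c : ℝ), 0 ≤ c → ∀ y ∈ K, c • y ∈ K)

include hconv hcone

theorem Kadd {u v : E} (hu : u ∈ K) (hv : v ∈ K) : u + v ∈ K := by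
  have h := hconv hu hv (by norm_num : (0:ℝ) ≤ 1/2) (by norm_num : (0:ℝ) ≤ 1/2) (by norm_num)
  have h2 := hcone 2 (by norm_num) _ h
  have : (2:ℝ) • ((1/2 : ℝ) • u + (1/2 : ℝ) • v) = u + v := by
    rw [smul_add, smul_smul, smul_smul]; norm_num
  rwa [this] at h2

theorem face_zero_mem {F : Set E} (hF : IsFaceOf K F) (hne : F.Nonempty) : (0:E) ∈ F := by
  obtain ⟨z, hz⟩ := hne
  have hzK : z ∈ K := hF.1 hz
  have h2z : (2:ℝ) • z ∈ K := hcone 2 (by norm_num) z hzK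
  have h0 : (0:E) ∈ K := by simpa using hcone 0 le_rfl z hzK
  have := hF.2.2 h2z h0 (by norm_num : (0:ℝ) < 1/2) (by norm_num)
  simp only [smul_zero, add_zero, smul_smul] at this
  exact (this (by norm_num; exact hz)).2

theorem face_smul_mem {F : Set E} (hF : IsFaceOf K F) {t : ℝ} (ht : 0 ≤ t) {z : E}
    (hz : z ∈ F) : t • z ∈ F := by
  have h0 : (0:E) ∈ F := face_zero_mem hconv hcone hF ⟨z, hz⟩
  rcases le_or_gt t 1 with h1 | h1
  · have := hF.2.1 hz h0 ht (by linarith : (0:ℝ) ≤ 1 - t) (by ring)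
    simpa using this
  · have htz : t • z ∈ K := hcone t (by linarith) z (hF.1 hz)
    have h0K : (0:E) ∈ K := hF.1 h0
    have hlt : (0:ℝ) < 1/t := by positivity
    have := hF.2.2 htz h0K hlt (by rw [div_lt_one (by linarith)]; linarith)
    simp only [smul_zero, add_zero, smul_smul] at this
    exact (this (by rw [one_div, inv_mul_cancel₀ (by linarith), one_smul]; exact hz)).1

omit hconv hcone

/-- The minimal face of `K` containing `x`. -/
def minFace (K : Set E) (x : E) : Set E :=
  {z ∈ K | ∃ ε : ℝ, 0 < ε ∧ x - ε • z ∈ K}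

include hconv hcone

theorem mem_minFace_self {x : E} (hx : x ∈ K) : x ∈ minFace K x := by
  refine ⟨hx, 1/2, by norm_num, ?_⟩
  have : x - (1/2 : ℝ) • x = (1/2 : ℝ) • x := by
    rw [sub_eq_iff_eq_add, ← add_smul]; norm_num
  rw [this]; exact hcone _ (by norm_num) x hx

theorem minFace_shrink {x z : E} (hx : x ∈ K) {ε ε' : ℝ} (hε : 0 < ε) (hε' : 0 < ε')
    (hle : ε ≤ ε') (h : x - ε' • z ∈ K) : x - ε • z ∈ K := by
  have ha : (0:ℝ) < ε / ε' := by positivity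
  have ha1 : ε / ε' ≤ 1 := by rw [div_le_one hε']; exact hle
  have h1 : ε / ε' * ε' = ε := div_mul_cancel₀ _ (ne_of_gt hε')
  have hc := hconv h hx (a := ε/ε') (b := 1 - ε/ε') (le_of_lt ha) (by linarith) (by ring)
  have heq : (ε/ε') • (x - ε' • z) + (1 - ε/ε') • x = x - ε • z := by
    have hne : ε' ≠ 0 := ne_of_gt hε'
    match_scalars <;> field_simp <;> ring
  rwa [heq] at hc

theorem minFace_isFace {x : E} (hx : x ∈ K) : IsFaceOf K (minFace K x) := by
  refine ⟨fun z hz => hz.1, ?_, ?_⟩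
  · rintro z₁ ⟨hz₁K, ε₁, hε₁, h₁⟩ z₂ ⟨hz₂K, ε₂, hε₂, h₂⟩ a b ha hb hab
    have hεm : 0 < min ε₁ ε₂ := lt_min hε₁ hε₂
    refine ⟨hconv hz₁K hz₂K ha hb hab, min ε₁ ε₂, hεm, ?_⟩
    have k₁ : x - min ε₁ ε₂ • z₁ ∈ K :=
      minFace_shrink hconv hcone hx hεm hε₁ (min_le_left _ _) h₁
    have k₂ : x - min ε₁ ε₂ • z₂ ∈ K :=
      minFace_shrink hconv hcone hx hεm hε₂ (min_le_right _ _) h₂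
    have hc := hconv k₁ k₂ ha hb hab
    have hb' : b = 1 - a := by linarith
    subst hb'
    have heq : a • (x - (ε₁ ⊓ ε₂) • z₁) + (1-a) • (x - (ε₁ ⊓ ε₂) • z₂)
        = x - (ε₁ ⊓ ε₂) • (a • z₁ + (1-a) • z₂) := by
      match_scalars <;> ring
    rwa [heq] at hc
  · rintro u hu w hw a ha ha1 ⟨hpK, ε, hε, hp⟩
    constructor
    · refine ⟨hu, ε * a, by positivity, ?_⟩
      have hmem : (x - ε • (a • u + (1-a) • w)) + (ε * (1-a)) • w ∈ K :=
        Kadd hconv hcone hp (hcone _ (by nlinarith) w hw)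
      have heq : (x - ε • (a • u + (1-a) • w)) + (ε * (1-a)) • w = x - (ε * a) • u := by
        match_scalars <;> ring
      rwa [heq] at hmem
    · refine ⟨hw, ε * (1-a), by nlinarith, ?_⟩
      have hmem : (x - ε • (a • u + (1-a) • w)) + (ε * a) • u ∈ K :=
        Kadd hconv hcone hp (hcone _ (by positivity) u hu)
      have heq : (x - ε • (a • u + (1-a) • w)) + (ε * a) • u = x - (ε * (1-a)) • w := by
        match_scalars <;> ring
      rwa [heq] at hmem

theorem minFace_min {x : E} {F : Set E} (hF : IsFaceOf K F) (hxF : x ∈ F) :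
    minFace K x ⊆ F := by
  rintro z ⟨hzK, ε, hε, hz⟩
  have hu : (2:ℝ) • (x - ε • z) ∈ K := hcone 2 (by norm_num) _ hz
  have hv : (2*ε) • z ∈ K := hcone _ (by positivity) z hzK
  have heq : (1/2 : ℝ) • ((2:ℝ) • (x - ε • z)) + (1 - 1/2 : ℝ) • ((2*ε) • z) = x := by
    norm_num [smul_sub, smul_smul]
  have := hF.2.2 hu hv (by norm_num : (0:ℝ) < 1/2) (by norm_num) (by rw [heq]; exact hxF)
  have hvF : (2*ε) • z ∈ F := this.2
  have := face_smul_mem hconv hcone hF (t := (2*ε)⁻¹) (by positivity) hvF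
  rwa [smul_smul, inv_mul_cancel₀ (by positivity), one_smul] at this

end Cara

section Closed

set_option linter.unusedSectionVars false

variable {E : Type*} [NormedAddCommGroup E] [NormedSpace ℝ E] [FiniteDimensional ℝ E]
variable {K : Set E}
variable (hconv : Convex ℝ K) (hcone : ∀ (c : ℝ), 0 ≤ c → ∀ y ∈ K, c • y ∈ K)

include hconv hcone

theorem face_add_mem {F : Set E} (hF : IsFaceOf K F) {u v : E} (hu : u ∈ F) (hv : v ∈ F) :
    u + v ∈ F := by
  have h := hF.2.1 hu hv (by norm_num : (0:ℝ) ≤ 1/2) (by norm_num : (0:ℝ) ≤ 1/2) (by norm_num)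
  have h2 := face_smul_mem hconv hcone hF (t := 2) (by norm_num) h
  have : (2:ℝ) • ((1/2 : ℝ) • u + (1/2 : ℝ) • v) = u + v := by
    rw [smul_add, smul_smul, smul_smul]; norm_num
  rwa [this] at h2

theorem face_span_sub {F : Set E} (hF : IsFaceOf K F) (hne : F.Nonempty) {z : E}
    (hz : z ∈ Submodule.span ℝ F) : ∃ p ∈ F, ∃ q ∈ F, z = p - q := by
  have h0 : (0:E) ∈ F := face_zero_mem hconv hcone hF hne
  induction hz using Submodule.span_induction with
  | mem w hw => exact ⟨w, hw, 0, h0, by simp⟩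
  | zero => exact ⟨0, h0, 0, h0, by simp⟩
  | add w₁ w₂ _ _ ih₁ ih₂ =>
    obtain ⟨p₁, hp₁, q₁, hq₁, rfl⟩ := ih₁
    obtain ⟨p₂, hp₂, q₂, hq₂, rfl⟩ := ih₂
    exact ⟨p₁ + p₂, face_add_mem hconv hcone hF hp₁ hp₂,
      q₁ + q₂, face_add_mem hconv hcone hF hq₁ hq₂, by abel⟩
  | smul c w _ ih =>
    obtain ⟨p, hp, q, hq, rfl⟩ := ih
    rcases le_or_gt 0 c with hc | hc
    · exact ⟨c • p, face_smul_mem hconv hcone hF hc hp,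
        c • q, face_smul_mem hconv hcone hF hc hq, by rw [smul_sub]⟩
    · refine ⟨(-c) • q, face_smul_mem hconv hcone hF (by linarith) hq,
        (-c) • p, face_smul_mem hconv hcone hF (by linarith) hp, ?_⟩
      rw [smul_sub, neg_smul, neg_smul]; abel

theorem minFace_eq_inter_span (hclosed : IsClosed K) {x : E} (hx : x ∈ K) :
    minFace K x = K ∩ (Submodule.span ℝ (minFace K x) : Set E) := by
  have hF := minFace_isFace hconv hcone hx
  apply Set.Subset.antisymm
  · exact fun z hz => ⟨hz.1, Submodule.subset_span hz⟩
  · rintro z ⟨hzK, hzspan⟩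
    obtain ⟨p, hp, q, hq, rfl⟩ := face_span_sub hconv hcone hF
      ⟨x, mem_minFace_self hconv hcone hx⟩ hzspan
    obtain ⟨hpK, ε, hε, hεp⟩ := hp
    refine ⟨hzK, ε, hε, ?_⟩
    have hq' : (ε : ℝ) • q ∈ K := hcone ε (le_of_lt hε) q hq.1
    have hmem : (x - ε • p) + ε • q ∈ K := Kadd hconv hcone hεp hq'
    have heq : (x - ε • p) + ε • q = x - ε • (p - q) := by
      rw [smul_sub]; abel
    rwa [heq] at hmem

theorem minFace_closed (hclosed : IsClosed K) {x : E} (hx : x ∈ K) :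
    IsClosed (minFace K x) := by
  rw [minFace_eq_inter_span hconv hcone hclosed hx]
  exact hclosed.inter (Submodule.closed_of_finiteDimensional _)

end Closed

section PosFunctional

variable {E : Type*} [NormedAddCommGroup E] [NormedSpace ℝ E] [FiniteDimensional ℝ E]

theorem exists_pos_functional {F : Set E} (hFc : IsClosed F) (hFconv : Convex ℝ F)
    (hFsmul : ∀ t : ℝ, 0 ≤ t → ∀ z ∈ F, t • z ∈ F)
    (hFpointed : ∀ z ∈ F, -z ∈ F → z = 0) :
    ∃ φ : E →L[ℝ] ℝ, ∀ z ∈ F, z ≠ 0 → 0 < φ z := by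
  by_cases hS : (F ∩ Metric.sphere (0:E) 1).Nonempty
  · obtain ⟨s₀, hs₀⟩ := hS
    have h0F : (0:E) ∈ F := by simpa using hFsmul 0 le_rfl s₀ hs₀.1
    -- for each s in F with s ≠ 0, get a functional nonneg on F and positive at s
    have key : ∀ s ∈ F, s ≠ 0 → ∃ ψ : E →L[ℝ] ℝ, (∀ z ∈ F, 0 ≤ ψ z) ∧ 0 < ψ s := by
      intro s hsF hs0
      have hsnotin : s ∉ -F := by
        intro h
        exact hs0 (hFpointed s hsF (by simpa [Set.mem_neg] using h))
      obtain ⟨f, u, hfs, hfb⟩ := geometric_hahn_banach_point_closed hFconv.neg hFc.neg hsnotin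
      have hu0 : u < 0 := by simpa using hfb 0 (by simpa [Set.mem_neg] using h0F)
      have hnonneg : ∀ z ∈ F, 0 ≤ -f z := by
        intro z hz
        by_contra hneg
        push_neg at hneg
        have hfz : 0 < f z := by linarith
        have htpos : (0:ℝ) < -u / f z + 1 := by
          have h1 : (0:ℝ) < -u := neg_pos.2 hu0
          have h2 := div_pos h1 hfz
          linarith
        set t : ℝ := -u / f z + 1 with ht
        have htz : t • z ∈ F := hFsmul t (le_of_lt htpos) z hz
        have hmem := hfb (-(t • z)) (by simpa [Set.mem_neg] using htz)
        simp only [map_neg, map_smul] at hmem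
        have hcalc : t * f z = -u + f z := by
          rw [ht, add_mul, one_mul, div_mul_cancel₀ _ (ne_of_gt hfz)]
        have hlt : u < -(t * f z) := by simpa [smul_eq_mul] using hmem
        nlinarith
      exact ⟨-f, by simpa using hnonneg, by simp; linarith⟩
    -- compactness of F ∩ sphere
    have hScomp : IsCompact (F ∩ Metric.sphere (0:E) 1) :=
      (isCompact_sphere (0:E) 1).inter_left hFc
    set S := F ∩ Metric.sphere (0:E) 1 with hSdef
    choose ψ hψ₁ hψ₂ using fun (s : S) =>
      key s.1 s.2.1 (by
        intro h
        have := s.2.2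
        rw [h] at this
        simp at this)
    have hcover : S ⊆ ⋃ s : S, {z | 0 < ψ s z} := by
      intro z hz
      exact Set.mem_iUnion.2 ⟨⟨z, hz⟩, hψ₂ _⟩
    obtain ⟨t, ht⟩ := hScomp.elim_finite_subcover (fun s : S => {z | 0 < ψ s z})
      (fun s => isOpen_lt continuous_const (ψ s).continuous) hcover
    refine ⟨∑ s ∈ t, ψ s, ?_⟩
    intro z hzF hz0
    have hnorm : ‖z‖ ≠ 0 := norm_ne_zero_iff.2 hz0
    have hzhat : ‖z‖⁻¹ • z ∈ S := by
      refine ⟨hFsmul _ (by positivity) z hzF, ?_⟩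
      simp [norm_smul, abs_of_nonneg (inv_nonneg.2 (norm_nonneg z)), inv_mul_cancel₀ hnorm]
    obtain ⟨i, hit, hiz⟩ := Set.mem_iUnion₂.1 (ht hzhat)
    have hsum : 0 < (∑ s ∈ t, ψ s) (‖z‖⁻¹ • z) := by
      rw [ContinuousLinearMap.sum_apply]
      exact Finset.sum_pos' (fun j _ => hψ₁ j _ hzhat.1) ⟨i, hit, hiz⟩
    have : (∑ s ∈ t, ψ s) z = ‖z‖ * (∑ s ∈ t, ψ s) (‖z‖⁻¹ • z) := by
      rw [map_smul, smul_eq_mul, ← mul_assoc, mul_inv_cancel₀ hnorm, one_mul]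
    rw [this]
    positivity
  · refine ⟨0, fun z hz hz0 => absurd ?_ hS⟩
    have hnorm : ‖z‖ ≠ 0 := norm_ne_zero_iff.2 hz0
    exact ⟨‖z‖⁻¹ • z, hFsmul _ (by positivity) z hz, by
      simp [norm_smul, abs_of_nonneg (inv_nonneg.2 (norm_nonneg z)), inv_mul_cancel₀ hnorm]⟩

end PosFunctional

section ExtremeRay

set_option linter.unusedSectionVars false
set_option maxHeartbeats 1000000

variable {E : Type*} [NormedAddCommGroup E] [NormedSpace ℝ E] [FiniteDimensional ℝ E]
variable {K : Set E}
variable (hconv : Convex ℝ K) (hcone : ∀ (c : ℝ), 0 ≤ c → ∀ y ∈ K, c • y ∈ K)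
variable (hclosed : IsClosed K) (hpointed : K ∩ (-K) = {0})

include hconv hcone hclosed hpointed

theorem Kpointed {z : E} (hz : z ∈ K) (hz' : -z ∈ K) : z = 0 := by
  have : z ∈ K ∩ (-K) := ⟨hz, by simpa [Set.mem_neg] using hz'⟩
  rw [hpointed] at this
  simpa using this

theorem ray_dim_one {e : E} (he : e ≠ 0) :
    setDim {z : E | ∃ t : ℝ, 0 ≤ t ∧ z = t • e} = 1 := by
  set R : Set E := {z : E | ∃ t : ℝ, 0 ≤ t ∧ z = t • e} with hR
  have h0R : (0:E) ∈ R := ⟨0, le_rfl, by simp⟩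
  have heR : e ∈ R := ⟨1, zero_le_one, by simp⟩
  have hspan : vectorSpan ℝ R = (Submodule.span ℝ {e} : Submodule ℝ E) := by
    apply le_antisymm
    · rw [vectorSpan_def]
      rw [Submodule.span_le]
      rintro v hv
      rw [Set.mem_vsub] at hv
      obtain ⟨p, hp, q, hq, rfl⟩ := hv
      obtain ⟨t₁, _, rfl⟩ := hp
      obtain ⟨t₂, _, rfl⟩ := hq
      have : t₁ • e -ᵥ t₂ • e = (t₁ - t₂) • e := by
        rw [vsub_eq_sub, ← sub_smul]
      rw [this]
      exact Submodule.smul_mem _ _ (Submodule.mem_span_singleton_self e)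
    · rw [Submodule.span_singleton_le_iff_mem, vectorSpan_def]
      apply Submodule.subset_span
      rw [Set.mem_vsub]
      exact ⟨e, heR, 0, h0R, by simp⟩
  rw [setDim, hspan]
  exact finrank_span_singleton he

theorem exists_extreme_ray {x : E} (hx : x ∈ K) (hx0 : x ≠ 0) :
    ∃ e : E, e ≠ 0 ∧ e ∈ minFace K x ∧
      IsExtremeRay K {z : E | ∃ t : ℝ, 0 ≤ t ∧ z = t • e} := by
  set F := minFace K x with hFdef
  have hF : IsFaceOf K F := minFace_isFace hconv hcone hx
  have hxF : x ∈ F := mem_minFace_self hconv hcone hx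
  have hFc : IsClosed F := minFace_closed hconv hcone hclosed hx
  have hFconv : Convex ℝ F := hF.2.1
  have hFsmul : ∀ t : ℝ, 0 ≤ t → ∀ z ∈ F, t • z ∈ F :=
    fun t ht z hz => face_smul_mem hconv hcone hF ht hz
  have hFpointed : ∀ z ∈ F, -z ∈ F → z = 0 :=
    fun z hz hz' => Kpointed hconv hcone hclosed hpointed (hF.1 hz) (hF.1 hz')
  obtain ⟨φ, hφ⟩ := exists_pos_functional hFc hFconv hFsmul hFpointed
  have hφx : 0 < φ x := hφ x hxF hx0
  -- the compact base B
  set B : Set E := {z ∈ F | φ z = 1} with hBdef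
  have hBclosed : IsClosed B := by
    have : B = F ∩ φ ⁻¹' {1} := by ext z; simp [hBdef, Set.mem_preimage]
    rw [this]
    exact hFc.inter (isClosed_singleton.preimage φ.continuous)
  have hBne : B.Nonempty := by
    refine ⟨(φ x)⁻¹ • x, hFsmul _ (by positivity) x hxF, ?_⟩
    rw [map_smul, smul_eq_mul, inv_mul_cancel₀ (ne_of_gt hφx)]
  -- lower bound on the sphere
  have hxhat : ‖x‖⁻¹ • x ∈ F ∩ Metric.sphere (0:E) 1 := by
    have hnx : ‖x‖ ≠ 0 := norm_ne_zero_iff.2 hx0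
    exact ⟨hFsmul _ (by positivity) x hxF, by
      simp [norm_smul, abs_of_nonneg (inv_nonneg.2 (norm_nonneg x)), inv_mul_cancel₀ hnx]⟩
  have hScomp : IsCompact (F ∩ Metric.sphere (0:E) 1) :=
    (isCompact_sphere (0:E) 1).inter_left hFc
  obtain ⟨s₀, hs₀S, hs₀min⟩ := hScomp.exists_isMinOn ⟨_, hxhat⟩ φ.continuous.continuousOn
  have hs₀0 : s₀ ≠ 0 := by
    intro h; have := hs₀S.2; rw [h] at this; simp at this
  have hc : 0 < φ s₀ := hφ s₀ hs₀S.1 hs₀0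
  have hφ_lb : ∀ z ∈ F, φ s₀ * ‖z‖ ≤ φ z := by
    intro z hz
    rcases eq_or_ne z 0 with rfl | hz0
    · simp
    · have hnz : ‖z‖ ≠ 0 := norm_ne_zero_iff.2 hz0
      have hzhat : ‖z‖⁻¹ • z ∈ F ∩ Metric.sphere (0:E) 1 :=
        ⟨hFsmul _ (by positivity) z hz, by
          simp [norm_smul, abs_of_nonneg (inv_nonneg.2 (norm_nonneg z)), inv_mul_cancel₀ hnz]⟩
      have := hs₀min hzhat
      simp only [Set.mem_setOf_eq, map_smul, smul_eq_mul] at this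
      have h2 : φ s₀ * ‖z‖ ≤ (‖z‖⁻¹ * φ z) * ‖z‖ := by
        apply mul_le_mul_of_nonneg_right this (norm_nonneg z)
      calc φ s₀ * ‖z‖ ≤ (‖z‖⁻¹ * φ z) * ‖z‖ := h2
        _ = φ z := by field_simp
  have hBbdd : Bornology.IsBounded B := by
    apply (Metric.isBounded_closedBall (x := (0:E)) (r := (φ s₀)⁻¹)).subset
    intro z hz
    rw [Metric.mem_closedBall, dist_zero_right]
    have := hφ_lb z hz.1
    rw [hz.2] at this
    have h3 : φ s₀ * (φ s₀)⁻¹ = 1 := mul_inv_cancel₀ (ne_of_gt hc)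
    nlinarith [this, hc, h3]
  have hBcomp : IsCompact B := Metric.isCompact_of_isClosed_isBounded hBclosed hBbdd
  obtain ⟨e, heB, hext⟩ := hBcomp.extremePoints_nonempty hBne
  have heF : e ∈ F := heB.1
  have hφe : φ e = 1 := heB.2
  have he0 : e ≠ 0 := by intro h; rw [h] at hφe; simp at hφe
  set R : Set E := {z : E | ∃ t : ℝ, 0 ≤ t ∧ z = t • e} with hRdef
  have hRsubF : R ⊆ F := by rintro z ⟨t, ht, rfl⟩; exact hFsmul t ht e heF
  refine ⟨e, he0, heF, ⟨⟨fun z hz => hF.1 (hRsubF hz), ?_, ?_⟩,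
    ray_dim_one hconv hcone hclosed hpointed he0⟩⟩
  · -- convexity of R
    rintro z₁ ⟨t₁, ht₁, rfl⟩ z₂ ⟨t₂, ht₂, rfl⟩ a b ha hb hab
    exact ⟨a * t₁ + b * t₂, by positivity, by
      rw [add_smul, smul_smul, smul_smul]⟩
  · -- extreme property of R
    rintro u hu w hw a ha ha1 ⟨t, ht, hte⟩
    have huF : u ∈ F ∧ w ∈ F := hF.2.2 hu hw ha ha1 (by rw [hte]; exact hRsubF ⟨t, ht, rfl⟩)
    obtain ⟨huF, hwF⟩ := huF
    have ha1' : (0:ℝ) < 1 - a := by linarith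
    rcases eq_or_lt_of_le ht with ht0 | htpos
    · -- t = 0 : the combination is 0
      have hzero : a • u + (1 - a) • w = 0 := by rw [hte, ← ht0, zero_smul]
      have hau : a • u ∈ F := hFsmul a (le_of_lt ha) u huF
      have hnau : -(a • u) ∈ F := by
        have : -(a • u) = (1 - a) • w := by
          rw [neg_eq_iff_add_eq_zero]; exact hzero
        rw [this]; exact hFsmul _ (le_of_lt ha1') w hwF
      have hu0 : u = 0 := by
        have := hFpointed _ hau hnau
        have ha' : a ≠ 0 := ne_of_gt ha
        simp only [smul_eq_zero, ha', false_or] at this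
        tauto
      have hw0 : w = 0 := by
        rw [hu0, smul_zero, zero_add] at hzero
        have := smul_eq_zero.1 hzero
        rcases this with h | h
        · exact absurd h (ne_of_gt ha1')
        · exact h
      exact ⟨⟨0, le_rfl, by rw [hu0, zero_smul]⟩, ⟨0, le_rfl, by rw [hw0, zero_smul]⟩⟩
    · -- t > 0
      rcases eq_or_ne u 0 with rfl | hu0
      · refine ⟨⟨0, le_rfl, by rw [zero_smul]⟩, ⟨(1-a)⁻¹ * t, by positivity, ?_⟩⟩
        rw [smul_zero, zero_add] at hte
        rw [← smul_smul, ← hte, smul_smul, inv_mul_cancel₀ (ne_of_gt ha1'), one_smul]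
      rcases eq_or_ne w 0 with rfl | hw0
      · refine ⟨⟨a⁻¹ * t, by positivity, ?_⟩, ⟨0, le_rfl, by rw [zero_smul]⟩⟩
        rw [smul_zero, add_zero] at hte
        rw [← smul_smul, ← hte, smul_smul, inv_mul_cancel₀ (ne_of_gt ha), one_smul]
      have hφu : 0 < φ u := hφ u huF hu0
      have hφw : 0 < φ w := hφ w hwF hw0
      have hαβ : a * φ u + (1 - a) * φ w = t := by
        have : φ (a • u + (1 - a) • w) = φ (t • e) := by rw [hte]
        simpa [map_add, map_smul, smul_eq_mul, hφe] using this
      have hu' : (φ u)⁻¹ • u ∈ B :=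
        ⟨hFsmul _ (by positivity) u huF, by
          rw [map_smul, smul_eq_mul, inv_mul_cancel₀ (ne_of_gt hφu)]⟩
      have hw' : (φ w)⁻¹ • w ∈ B :=
        ⟨hFsmul _ (by positivity) w hwF, by
          rw [map_smul, smul_eq_mul, inv_mul_cancel₀ (ne_of_gt hφw)]⟩
      have hseg : e ∈ openSegment ℝ ((φ u)⁻¹ • u) ((φ w)⁻¹ • w) := by
        refine ⟨a * φ u / t, (1 - a) * φ w / t, by positivity, by positivity, ?_, ?_⟩
        · field_simp
          linarith [hαβ]
        · rw [smul_smul, smul_smul]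
          have e₁ : a * φ u / t * (φ u)⁻¹ = a / t := by
            field_simp
          have e₂ : (1 - a) * φ w / t * (φ w)⁻¹ = (1 - a) / t := by
            field_simp
          rw [e₁, e₂]
          have : (a / t) • u + ((1 - a) / t) • w = t⁻¹ • (a • u + (1 - a) • w) := by
            rw [smul_add, smul_smul, smul_smul]
            rw [div_eq_inv_mul, div_eq_inv_mul]
          rw [this, hte, smul_smul, inv_mul_cancel₀ (ne_of_gt htpos), one_smul]
      obtain ⟨hu'e, hw'e⟩ := (mem_extremePoints.1 ⟨heB, hext⟩).2 _ hu' _ hw' hseg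
      refine ⟨⟨φ u, le_of_lt hφu, ?_⟩, ⟨φ w, le_of_lt hφw, ?_⟩⟩
      · rw [← hu'e, smul_smul, mul_inv_cancel₀ (ne_of_gt hφu), one_smul]
      · rw [← hw'e, smul_smul, mul_inv_cancel₀ (ne_of_gt hφw), one_smul]

end ExtremeRay

theorem strictAnti_fin_cons {k : ℕ} {α : Type*} [Preorder α] {F : α} {c : Fin k → α}
    (hc : StrictAnti c) (hF : ∀ i, c i < F) : StrictAnti (Fin.cons F c) := by
  intro i j hij
  induction i using Fin.cases with
  | zero =>
    induction j using Fin.cases with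
    | zero => exact absurd hij (lt_irrefl _)
    | succ j => simpa using hF j
  | succ i =>
    induction j using Fin.cases with
    | zero => exact absurd hij (by simp [Fin.lt_def])
    | succ j => simpa using hc (Fin.succ_lt_succ_iff.mp hij)

section Decompose

set_option linter.unusedSectionVars false
set_option maxHeartbeats 1000000

variable {E : Type*} [NormedAddCommGroup E] [NormedSpace ℝ E] [FiniteDimensional ℝ E]
variable {K : Set E}
variable (hconv : Convex ℝ K) (hcone : ∀ (c : ℝ), 0 ≤ c → ∀ y ∈ K, c • y ∈ K)
variable (hclosed : IsClosed K) (hpointed : K ∩ (-K) = {0})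

include hconv hcone hclosed hpointed

theorem decompose {x : E} (hx : x ∈ K) (hx0 : x ≠ 0) :
    ∃ (e : E) (t : ℝ) (y : E), IsExtremeRay K {z : E | ∃ s : ℝ, 0 ≤ s ∧ z = s • e} ∧
      0 ≤ t ∧ y ∈ K ∧ x = t • e + y ∧ minFace K y ⊂ minFace K x := by
  obtain ⟨e, he0, heMF, heray⟩ := exists_extreme_ray hconv hcone hclosed hpointed hx hx0
  have heK : e ∈ K := heMF.1
  set T : Set ℝ := {t : ℝ | 0 ≤ t ∧ x - t • e ∈ K} with hTdef
  have h0T : (0:ℝ) ∈ T := ⟨le_rfl, by simpa using hx⟩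
  have hTne : T.Nonempty := ⟨0, h0T⟩
  have hTclosed : IsClosed T := by
    have : T = Set.Ici (0:ℝ) ∩ (fun t : ℝ => x - t • e) ⁻¹' K := by
      ext t; simp [hTdef, Set.mem_preimage]
    rw [this]
    exact isClosed_Ici.inter (hclosed.preimage (by continuity))
  have hTbdd : BddAbove T := by
    by_contra hb
    rw [not_bddAbove_iff] at hb
    choose f hfT hfgt using fun n : ℕ => hb ((n:ℝ) + 1)
    have hfpos : ∀ n, (0:ℝ) < f n := fun n =>
      lt_of_le_of_lt (by positivity) (hfgt n)
    have hmem : ∀ n, (f n)⁻¹ • x - e ∈ K := by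
      intro n
      have := hcone (f n)⁻¹ (inv_nonneg.2 (le_of_lt (hfpos n))) _ (hfT n).2
      have heq : (f n)⁻¹ • (x - f n • e) = (f n)⁻¹ • x - e := by
        rw [smul_sub, smul_smul, inv_mul_cancel₀ (ne_of_gt (hfpos n)), one_smul]
      rwa [heq] at this
    have hg : Filter.Tendsto (fun n : ℕ => ((n:ℝ)+1)⁻¹) Filter.atTop (nhds 0) := by
      simpa [one_div] using tendsto_one_div_add_atTop_nhds_zero_nat (𝕜 := ℝ)
    have htend0 : Filter.Tendsto (fun n : ℕ => (f n)⁻¹) Filter.atTop (nhds 0) := by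
      refine squeeze_zero (fun n => inv_nonneg.2 (le_of_lt (hfpos n))) (fun n => ?_) hg
      have hpos : (0:ℝ) < (n:ℝ)+1 := by positivity
      exact inv_anti₀ hpos (hfgt n).le
    have htend : Filter.Tendsto (fun n : ℕ => (f n)⁻¹ • x - e) Filter.atTop (nhds (-e)) := by
      have h1 := (htend0.smul_const x).sub_const e
      simpa using h1
    have hneK : -e ∈ K := hclosed.mem_of_tendsto htend (Filter.Eventually.of_forall hmem)
    exact he0 (Kpointed hconv hcone hclosed hpointed heK hneK)
  set t₀ : ℝ := sSup T with ht₀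
  have ht₀T : t₀ ∈ T := hTclosed.csSup_mem hTne hTbdd
  have ht₀0 : 0 ≤ t₀ := ht₀T.1
  set y : E := x - t₀ • e with hy
  have hyK : y ∈ K := ht₀T.2
  have hyMF : y ∈ minFace K x := by
    refine ⟨hyK, 1/2, by norm_num, ?_⟩
    have heq : x - (1/2 : ℝ) • y = (1/2 : ℝ) • x + (t₀/2) • e := by
      rw [hy]; match_scalars <;> ring
    rw [heq]
    exact Kadd hconv hcone (hcone _ (by norm_num) x hx) (hcone _ (by positivity) e heK)
  have hsub : minFace K y ⊆ minFace K x :=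
    minFace_min hconv hcone (minFace_isFace hconv hcone hx) hyMF
  have hxnot : x ∉ minFace K y := by
    intro hxy
    have hsub' : minFace K x ⊆ minFace K y :=
      minFace_min hconv hcone (minFace_isFace hconv hcone hyK) hxy
    obtain ⟨-, ε, hε, hyε⟩ := hsub' heMF
    have : t₀ + ε ∈ T := by
      refine ⟨by linarith, ?_⟩
      have heq : x - (t₀ + ε) • e = y - ε • e := by
        rw [hy, add_smul]; abel
      rwa [heq]
    have := le_csSup hTbdd this
    linarith
  refine ⟨e, t₀, y, heray, ht₀0, hyK, by rw [hy]; abel, ?_⟩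
  rw [Set.ssubset_iff_of_subset hsub]
  exact ⟨x, mem_minFace_self hconv hcone hx, hxnot⟩

theorem main_ind : ∀ m : ℕ, ∀ x ∈ K,
    (∀ (k : ℕ) (c : Fin k → Set E), StrictAnti c →
      (∀ i, IsFaceOf K (c i) ∧ (c i).Nonempty ∧ c i ⊆ minFace K x) → k ≤ m) →
    IsSumOfExtremeRayElems K (m - 1) x := by
  intro m
  induction m with
  | zero =>
    intro x hx hbound
    exfalso
    have := hbound 1 (fun _ => minFace K x)
      (fun i j hij => absurd hij (by rw [Subsingleton.elim i j]; exact lt_irrefl j))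
      (fun i => ⟨minFace_isFace hconv hcone hx,
        ⟨x, mem_minFace_self hconv hcone hx⟩, subset_rfl⟩)
    omega
  | succ m ih =>
    intro x hx hbound
    by_cases hx0 : x = 0
    · exact ⟨0, Nat.zero_le _, fun i => 0, fun i => i.elim0, by simp [hx0]⟩
    obtain ⟨e, t, y, heray, ht, hyK, hxeq, hss⟩ :=
      decompose hconv hcone hclosed hpointed hx hx0
    have hm1 : 1 ≤ m := by
      have := hbound 2 (Fin.cons (minFace K x) (fun _ : Fin 1 => minFace K y))
        (strictAnti_fin_cons (fun i j hij => absurd hij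
            (by rw [Subsingleton.elim i j]; exact lt_irrefl j))
          (fun _ => hss))
        (by
          intro i
          induction i using Fin.cases with
          | zero => exact ⟨minFace_isFace hconv hcone hx,
              ⟨x, mem_minFace_self hconv hcone hx⟩, subset_rfl⟩
          | succ j => exact ⟨minFace_isFace hconv hcone hyK,
              ⟨y, mem_minFace_self hconv hcone hyK⟩, hss.subset⟩)
      omega
    have hboundy : ∀ (k : ℕ) (c : Fin k → Set E), StrictAnti c →
        (∀ i, IsFaceOf K (c i) ∧ (c i).Nonempty ∧ c i ⊆ minFace K y) → k ≤ m := by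
      intro k c hanti hprop
      have hk1 := hbound (k+1) (Fin.cons (minFace K x) c)
        (strictAnti_fin_cons hanti (fun i => lt_of_le_of_lt (hprop i).2.2 hss))
        (by
          intro i
          induction i using Fin.cases with
          | zero => exact ⟨minFace_isFace hconv hcone hx,
              ⟨x, mem_minFace_self hconv hcone hx⟩, subset_rfl⟩
          | succ j =>
            refine ⟨(hprop j).1, (hprop j).2.1, ?_⟩
            simpa using (hprop j).2.2.trans hss.subset)
      omega
    obtain ⟨m', hm', f, hf, hsum⟩ := ih y hyK hboundy
    refine ⟨m' + 1, by omega, Fin.cons (t • e) f, ?_, ?_⟩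
    · intro i
      induction i using Fin.cases with
      | zero => exact ⟨_, heray, ⟨t, ht, by simp⟩⟩
      | succ j => simpa using hf j
    · rw [Fin.sum_cons, ← hsum]
      exact hxeq

end Decompose

/-- For a pointed closed convex cone `K` whose longest chain of nonempty faces
has length `ℓ_K`, every `x ∈ K` is a sum of at most `ℓ_K − 1` elements of extreme rays of
`K`; that is, `κ(K) ≤ ℓ_K − 1`. -/
theorem caratheodory_stmt7 {n : ℕ} (K : Set (EuclideanSpace ℝ (Fin n)))
    (hconv : Convex ℝ K)
    (hcone : ∀ (c : ℝ), 0 ≤ c → ∀ y ∈ K, c • y ∈ K)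
    (hclosed : IsClosed K)
    (hpointed : K ∩ (-K) = {0})
    (l : ℕ) (hl : IsLongestFaceChainLength K l) :
    ∀ x ∈ K, IsSumOfExtremeRayElems K (l - 1) x := by
  intro x hx
  apply main_ind hconv hcone hclosed hpointed l x hx
  intro k c hanti hprop
  exact hl.2 k ⟨c, hanti, fun i => ⟨(hprop i).1, (hprop i).2.1⟩⟩
end

section
/- Let C ⊆ ℝⁿ be a nonempty compact convex set. Then every x ∈ C can be written as a convex combination of at most ℓ_C extreme points of C, where ℓ_C is the length of the longest chain of nonempty faces of C. -/
/-!
Induction on the length `l` of the longest chain of faces. Pick an extreme point `p` of `C` and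
follow the ray from `p` through `x` to the last point `q` of `C` on it. The smallest face of `C`
containing `q` consists of the `y ∈ C` for which `y - q` lies in the lineality space of the cone
of feasible directions at `q`; it is compact and does not contain `p` (otherwise the ray would
extend beyond `q`), so its chains of faces are shorter by one. By induction `q` is a convex
combination of at most `l - 1` extreme points of that face, which are extreme points of `C`,
and `x` lies on the segment `[p, q]`.
-/

open Set

section Faces

variable {E : Type*} [AddCommGroup E] [Module ℝ E] {C F G : Set E}

theorem IsFaceOf.refl (hC : Convex ℝ C) : IsFaceOf C C :=
  ⟨subset_rfl, hC, fun _ hx _ hy _ _ _ _ => ⟨hx, hy⟩⟩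

theorem IsFaceOf.trans (hF : IsFaceOf C F) (hG : IsFaceOf F G) : IsFaceOf C G := by
  refine ⟨hG.1.trans hF.1, hG.2.1, fun x hx y hy a ha0 ha1 hxy => ?_⟩
  obtain ⟨hxF, hyF⟩ := hF.2.2 hx hy ha0 ha1 (hG.1 hxy)
  exact hG.2.2 hxF hyF ha0 ha1 hxy

theorem IsFaceOf.isExtreme (hF : IsFaceOf C F) : IsExtreme ℝ C F := by
  refine ⟨hF.1, fun x hx y hy z hz ⟨a, b, ha, hb, hab, hxyz⟩ => ?_⟩
  obtain rfl : b = 1 - a := by linarith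
  exact (hF.2.2 hx hy ha (by linarith) (hxyz ▸ hz)).1

theorem IsFaceOf.extremePoints_subset (hF : IsFaceOf C F) :
    F.extremePoints ℝ ⊆ C.extremePoints ℝ :=
  hF.isExtreme.extremePoints_subset_extremePoints

theorem hasFaceChainOfLength_one (hC : Convex ℝ C) (hne : C.Nonempty) :
    HasFaceChainOfLength C 1 :=
  ⟨fun _ => C, Subsingleton.strictAnti _, fun _ => ⟨IsFaceOf.refl hC, hne⟩⟩

theorem HasFaceChainOfLength.succ_of_ssubset (hC : Convex ℝ C) (hF : IsFaceOf C F)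
    (hFC : F ⊂ C) {m : ℕ} (h : HasFaceChainOfLength F m) : HasFaceChainOfLength C (m + 1) := by
  obtain ⟨c, hc, hcF⟩ := h
  refine ⟨Fin.cons C c, (Fin.liftFun_cons (· > ·)).2 ⟨fun i => ?_, hc⟩, Fin.cases ?_ fun i => ?_⟩
  · exact (hcF i).1.1.trans_ssubset hFC
  · exact ⟨IsFaceOf.refl hC, nonempty_of_ssubset' hFC⟩
  · exact ⟨hF.trans (hcF i).1, (hcF i).2⟩

end Faces

section MinimalFace

variable {E : Type*} [AddCommGroup E] [Module ℝ E] {C : Set E} {q y v : E}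

def feasibleCone (C : Set E) (q : E) : PointedCone ℝ E :=
  PointedCone.hull ℝ ((q + ·) ⁻¹' C)

theorem sub_mem_feasibleCone (hy : y ∈ C) : y - q ∈ feasibleCone C q :=
  PointedCone.subset_hull (by simpa using hy)

theorem exists_add_smul_mem_of_mem_feasibleCone (hC : Convex ℝ C) (hq : q ∈ C)
    (hv : v ∈ feasibleCone C q) : ∃ t : ℝ, 0 < t ∧ q + t • v ∈ C := by
  have hs : Convex ℝ ((q + ·) ⁻¹' C) := hC.translate_preimage_right q
  have hle : feasibleCone C q ≤ (ConvexCone.hull ℝ ((q + ·) ⁻¹' C)).toPointedCone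
      (ConvexCone.subset_hull (by simpa using hq)) :=
    Submodule.span_le.2 ConvexCone.subset_hull
  obtain ⟨r, hr, hv⟩ := (ConvexCone.mem_hull_of_convex hs).1 (hle hv)
  exact ⟨r⁻¹, inv_pos.2 hr, (Set.mem_smul_set_iff_inv_smul_mem₀ hr.ne' _ _).1 hv⟩

theorem neg_sub_mem_feasibleCone {u v : E} {a b : ℝ} (hv : v ∈ C) (ha : 0 < a) (hb : 0 ≤ b)
    (hab : a + b = 1) (hw : -(a • u + b • v - q) ∈ feasibleCone C q) :
    -(u - q) ∈ feasibleCone C q := by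
  have key : a • -(u - q) = -(a • u + b • v - q) + b • (v - q) := by
    linear_combination (norm := module) hab • q
  rw [← PointedCone.smul_mem_iff _ ha, key]
  exact add_mem hw (PointedCone.smul_mem _ hb (sub_mem_feasibleCone hv))

def minimalFace (C : Set E) (q : E) : Set E :=
  {y ∈ C | y - q ∈ (feasibleCone C q).lineal}

theorem mem_minimalFace_self (hq : q ∈ C) : q ∈ minimalFace C q :=
  ⟨hq, by simp⟩

theorem left_mem_minimalFace {u v : E} {a b : ℝ} (hu : u ∈ C) (hv : v ∈ C) (ha : 0 < a)
    (hb : 0 ≤ b) (hab : a + b = 1) (hw : a • u + b • v ∈ minimalFace C q) :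
    u ∈ minimalFace C q :=
  ⟨hu, sub_mem_feasibleCone hu, neg_sub_mem_feasibleCone hv ha hb hab hw.2.2⟩

theorem convex_minimalFace (hC : Convex ℝ C) : Convex ℝ (minimalFace C q) := by
  intro y₁ h₁ y₂ h₂ a b ha hb hab
  refine ⟨hC h₁.1 h₂.1 ha hb hab, ?_⟩
  have key : a • y₁ + b • y₂ - q = a • (y₁ - q) + b • (y₂ - q) := by
    linear_combination (norm := module) hab • q
  rw [key]
  exact add_mem (Submodule.smul_mem _ a h₁.2) (Submodule.smul_mem _ b h₂.2)

theorem isFaceOf_minimalFace (hC : Convex ℝ C) : IsFaceOf C (minimalFace C q) := by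
  refine ⟨fun y hy => hy.1, convex_minimalFace hC, fun u hu v hv a ha0 ha1 hw => ?_⟩
  exact ⟨left_mem_minimalFace (b := 1 - a) hu hv ha0 (by linarith) (by ring) hw,
    left_mem_minimalFace (a := 1 - a) (b := a) hv hu (by linarith) ha0.le (by ring)
      (by rwa [add_comm])⟩

theorem notMem_minimalFace_of_isGreatest (hC : Convex ℝ C) {p : E} {b : ℝ}
    (hb : IsGreatest {t : ℝ | p + t • v ∈ C} b) (hb0 : 0 < b) : p ∉ minimalFace C (p + b • v) := by
  intro hp
  obtain ⟨t, ht, hpt⟩ := exists_add_smul_mem_of_mem_feasibleCone hC hb.1 hp.2.2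
  have hbt : p + (b + t * b) • v ∈ C := by
    convert hpt using 1
    module
  nlinarith [hb.2 hbt, mul_pos ht hb0]

end MinimalFace

section Topology

variable {E : Type*} [AddCommGroup E] [Module ℝ E] [TopologicalSpace E] [IsTopologicalAddGroup E]
  [ContinuousSMul ℝ E] [T2Space E] {C : Set E}

theorem isClosed_minimalFace [FiniteDimensional ℝ E] (hC : IsClosed C) (q : E) :
    IsClosed (minimalFace C q) :=
  hC.inter ((feasibleCone C q).lineal.closed_of_finiteDimensional.preimage
    (continuous_sub_right q))

theorem IsCompact.exists_isGreatest_add_smul_mem (hC : IsCompact C) (p : E) {v : E} (hv : v ≠ 0)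
    (hne : ∃ t : ℝ, p + t • v ∈ C) : ∃ b, IsGreatest {t : ℝ | p + t • v ∈ C} b :=
  (((Homeomorph.addLeft p).isClosedEmbedding.comp
    (isClosedEmbedding_smul_left hv)).isCompact_preimage hC).exists_isGreatest hne

end Topology

section ConvexCombination

variable {E : Type*} [AddCommGroup E] [Module ℝ E]

def IsConvexCombOfAtMost (S : Set E) (k : ℕ) (x : E) : Prop :=
  ∃ m : ℕ, m ≤ k ∧ ∃ (w : Fin m → ℝ) (p : Fin m → E),
    (∀ i, 0 ≤ w i) ∧ (∑ i, w i) = 1 ∧ (∀ i, p i ∈ S) ∧ x = ∑ i, w i • p i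

variable {S T : Set E} {k : ℕ} {p q : E}

theorem IsConvexCombOfAtMost.mono (h : IsConvexCombOfAtMost S k q) (hST : S ⊆ T) :
    IsConvexCombOfAtMost T k q :=
  let ⟨m, hm, w, p, hw, hw1, hp, hq⟩ := h
  ⟨m, hm, w, p, hw, hw1, fun i => hST (hp i), hq⟩

theorem isConvexCombOfAtMost_of_mem (hp : p ∈ S) (hk : 1 ≤ k) : IsConvexCombOfAtMost S k p :=
  ⟨1, hk, fun _ => 1, fun _ => p, fun _ => zero_le_one, by simp, fun _ => hp, by simp⟩

theorem IsConvexCombOfAtMost.cons (hq : IsConvexCombOfAtMost S k q) (hp : p ∈ S)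
    {β : ℝ} (hβ0 : 0 ≤ β) (hβ1 : β ≤ 1) :
    IsConvexCombOfAtMost S (k + 1) ((1 - β) • p + β • q) := by
  obtain ⟨m, hm, w, ps, hw, hw1, hps, rfl⟩ := hq
  refine ⟨m + 1, by omega, Fin.cons (1 - β) (β • w), Fin.cons p ps,
    Fin.cases (sub_nonneg.2 hβ1) fun i => mul_nonneg hβ0 (hw i), ?_, Fin.cases hp hps, ?_⟩
  · simp [Fin.sum_cons, ← Finset.mul_sum, hw1]
  · simp [Fin.sum_univ_succ, Finset.smul_sum, smul_smul]

end ConvexCombination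

section Caratheodory

variable {E : Type*} [AddCommGroup E] [Module ℝ E] [TopologicalSpace E] [IsTopologicalAddGroup E]
  [ContinuousSMul ℝ E] [T2Space E] [LocallyConvexSpace ℝ E] [FiniteDimensional ℝ E]

theorem isConvexCombOfAtMost_extremePoints {C : Set E} (hCc : IsCompact C) (hC : Convex ℝ C)
    {l : ℕ} (hl : ∀ m, HasFaceChainOfLength C m → m ≤ l) {x : E} (hx : x ∈ C) :
    IsConvexCombOfAtMost (C.extremePoints ℝ) l x := by
  induction l generalizing C x with
  | zero => exact absurd (hl 1 (hasFaceChainOfLength_one hC ⟨x, hx⟩)) (by decide)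
  | succ l ih =>
    obtain ⟨p, hp⟩ := hCc.extremePoints_nonempty ⟨x, hx⟩
    obtain rfl | hxp := eq_or_ne x p
    · exact isConvexCombOfAtMost_of_mem hp (by omega)
    obtain ⟨b, hb⟩ := hCc.exists_isGreatest_add_smul_mem p (sub_ne_zero.2 hxp)
      ⟨1, by simpa using hx⟩
    have hb1 : 1 ≤ b := hb.2 (by simpa using hx)
    set q := p + b • (x - p)
    have hF := isFaceOf_minimalFace hC (q := q)
    have hpF : p ∉ minimalFace C q := notMem_minimalFace_of_isGreatest hC hb (by linarith)
    have hFl (m : ℕ) (hm : HasFaceChainOfLength (minimalFace C q) m) : m ≤ l :=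
      Nat.le_of_succ_le_succ <| hl _ <|
        hm.succ_of_ssubset hC hF ((ssubset_iff_of_subset hF.1).2 ⟨p, hp.1, hpF⟩)
    have hq := ih (hCc.of_isClosed_subset (isClosed_minimalFace hCc.isClosed q) hF.1)
      (convex_minimalFace hC) hFl (mem_minimalFace_self hb.1)
    have hxq : x = (1 - b⁻¹) • p + b⁻¹ • q := by
      linear_combination (norm := module) (inv_mul_cancel₀ (by linarith : b ≠ 0)).symm • (x - p)
    rw [hxq]
    exact (hq.mono hF.extremePoints_subset).cons hp (by positivity)
      (inv_le_one_of_one_le₀ hb1)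

end Caratheodory

theorem caratheodory_stmt11_general {n : ℕ} (C : Set (EuclideanSpace ℝ (Fin n)))
    (hCcompact : IsCompact C) (hCconv : Convex ℝ C)
    (l : ℕ) (hl : IsLongestFaceChainLength C l) :
    ∀ x ∈ C, ∃ m : ℕ, m ≤ l ∧ ∃ (w : Fin m → ℝ) (p : Fin m → EuclideanSpace ℝ (Fin n)),
      (∀ i, 0 ≤ w i) ∧ (∑ i, w i) = 1 ∧
      (∀ i, p i ∈ Set.extremePoints ℝ C) ∧ x = ∑ i, w i • p i :=
  fun _ hx => isConvexCombOfAtMost_extremePoints hCcompact hCconv hl.2 hx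

/-- For a nonempty compact convex set `C` whose longest chain of nonempty
faces has length `ℓ_C`, every `x ∈ C` is a convex combination of at most `ℓ_C` extreme
points of `C`. -/
theorem caratheodory_stmt11 {n : ℕ} (C : Set (EuclideanSpace ℝ (Fin n)))
    (hCne : C.Nonempty) (hCcompact : IsCompact C) (hCconv : Convex ℝ C)
    (l : ℕ) (hl : IsLongestFaceChainLength C l) :
    ∀ x ∈ C, ∃ m : ℕ, m ≤ l ∧ ∃ (w : Fin m → ℝ) (p : Fin m → EuclideanSpace ℝ (Fin n)),
      (∀ i, 0 ≤ w i) ∧ (∑ i, w i) = 1 ∧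
      (∀ i, p i ∈ Set.extremePoints ℝ C) ∧ x = ∑ i, w i • p i :=
  caratheodory_stmt11_general C hCcompact hCconv l hl
end
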